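/- arXiv:2507.13615 — 4 statements merged into one kernel-verified Lean document; each statement's English description precedes it below -/
import Mathlib

section
/- For all t, θ, γ1, γ2 ∈ ℝ, τ ≥ 0, s > 0 and ρ ∈ (−1, 1), the Gaussian integral identity ∫_ℝ φ(u) · (1/s) φ((t − θ − τu)/s) · Φ((γ1 + γ2/s + ρ(t − θ − τu)/s)/√(1 − ρ²)) du = (1/√(τ² + s²)) φ((t − θ)/√(τ² + s²)) · Φ(v(t, s; γ)) holds, where v(t, s; γ) = (γ1 + γ2/s + ρ s (t − θ)/(τ² + s²)) / √(1 − ρ² s²/(τ² + s²)). -/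
/-!
Completing the square factors `φ(u) · (1/s) φ((c - τu)/s)` into the `N(0, τ² + s²)` density of
`c = t - θ` times the posterior `N(τc/(τ² + s²), s²/(τ² + s²))` density of `u`. What remains is
`E Φ((a + bU)/√w)` for a Gaussian `U ~ N(m, v)`: it is the probability that `Z - bU ≤ a` with
`Z ~ N(0, w)` independent of `U`, and `Z - bU ~ N(-bm, b²v + w)` is again Gaussian.
-/

open MeasureTheory ProbabilityTheory

/-- Standard normal distribution function `Φ`. -/
noncomputable def stdGaussianCDF (x : ℝ) : ℝ :=
  ((gaussianReal 0 1) (Set.Iic x)).toReal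

/-- Standard normal density `φ`. -/
noncomputable def stdGaussianPDF (x : ℝ) : ℝ :=
  gaussianPDFReal 0 1 x

open scoped NNReal

lemma gaussianPDFReal_eq_stdGaussianPDF (μ : ℝ) {v : ℝ≥0} (hv : v ≠ 0) (x : ℝ) :
    gaussianPDFReal μ v x = 1 / √v * stdGaussianPDF ((x - μ) / √v) := by
  have hv' : (0 : ℝ) < v := by positivity
  simp only [stdGaussianPDF, gaussianPDFReal, NNReal.coe_one, mul_one, sub_zero, div_pow,
    Real.sq_sqrt hv'.le, Real.sqrt_mul' _ hv'.le]
  field_simp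

lemma gaussianReal_map_standardize (μ : ℝ) {v : ℝ≥0} (hv : v ≠ 0) :
    (gaussianReal μ v).map (fun x ↦ (x - μ) / √v) = gaussianReal 0 1 := by
  have hv' : (0 : ℝ) < v := by positivity
  rw [show (fun x ↦ (x - μ) / √v) = (· / √v) ∘ (· - μ) from rfl,
    ← Measure.map_map (by fun_prop) (by fun_prop), gaussianReal_map_sub_const,
    gaussianReal_map_div_const, sub_self, zero_div]
  congr
  ext
  simp [Real.sq_sqrt hv'.le, hv'.ne']

lemma gaussianReal_Iic_toReal (μ : ℝ) {v : ℝ≥0} (hv : v ≠ 0) (a : ℝ) :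
    (gaussianReal μ v (Set.Iic a)).toReal = stdGaussianCDF ((a - μ) / √v) := by
  have hv' : 0 < √(v : ℝ) := by positivity
  rw [stdGaussianCDF, ← gaussianReal_map_standardize μ hv,
    Measure.map_apply (by fun_prop) measurableSet_Iic]
  congr
  ext x
  simp [div_le_div_iff_of_pos_right hv']

lemma gaussianPDFReal_mul_gaussianPDFReal_mul (m b x y : ℝ) {v w : ℝ≥0} (hv : v ≠ 0)
    (hw : w ≠ 0) :
    gaussianPDFReal m v x * gaussianPDFReal (b * x) w y
      = gaussianPDFReal (b * m) (.mk (b ^ 2) (sq_nonneg b) * v + w) y *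
        gaussianPDFReal (m + b * v * (y - b * m) / (b ^ 2 * v + w))
          (v * w / (.mk (b ^ 2) (sq_nonneg b) * v + w)) x := by
  have hv' : (0 : ℝ) < v := by positivity
  have hw' : (0 : ℝ) < w := by positivity
  have hS : 0 < b ^ 2 * (v : ℝ) + w := by positivity
  simp only [gaussianPDFReal, NNReal.coe_add, NNReal.coe_mul, NNReal.coe_mk, NNReal.coe_div]
  rw [mul_mul_mul_comm, mul_mul_mul_comm _ (Real.exp _), ← mul_inv, ← mul_inv,
    ← Real.sqrt_mul (by positivity), ← Real.sqrt_mul (by positivity), ← Real.exp_add,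
    ← Real.exp_add]
  congr 1
  · congr 2
    field_simp
  · congr 1
    field_simp
    ring

lemma stdGaussianPDF_mul_gaussianPDFReal_mul (b x y : ℝ) {w : ℝ≥0} (hw : w ≠ 0) :
    stdGaussianPDF x * gaussianPDFReal (b * x) w y
      = gaussianPDFReal 0 (.mk (b ^ 2) (sq_nonneg b) + w) y *
        gaussianPDFReal (b * y / (b ^ 2 + w)) (w / (.mk (b ^ 2) (sq_nonneg b) + w)) x := by
  rw [stdGaussianPDF, gaussianPDFReal_mul_gaussianPDFReal_mul 0 b x y one_ne_zero hw]
  simp only [NNReal.coe_one, mul_one, one_mul, mul_zero, sub_zero, zero_add]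

lemma gaussianReal_prod_map_mul_add (m₁ m₂ b : ℝ) (v₁ v₂ : ℝ≥0) :
    ((gaussianReal m₁ v₁).prod (gaussianReal m₂ v₂)).map (fun p ↦ b * p.1 + p.2)
      = gaussianReal (b * m₁ + m₂) (.mk (b ^ 2) (sq_nonneg b) * v₁ + v₂) := by
  rw [← gaussianReal_conv_gaussianReal, ← gaussianReal_map_const_mul b, Measure.conv,
    ← Measure.map_id (μ := gaussianReal m₂ v₂),
    Measure.map_prod_map _ _ (by fun_prop) (by fun_prop),
    Measure.map_map (by fun_prop) (by fun_prop), Measure.map_id]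
  rfl

lemma integral_stdGaussianCDF_gaussianReal (a b m : ℝ) (v : ℝ≥0) {w : ℝ≥0} (hw : w ≠ 0) :
    ∫ u, stdGaussianCDF ((a + b * u) / √w) ∂gaussianReal m v
      = stdGaussianCDF ((a + b * m) / √(b ^ 2 * v + w)) := by
  set S := (fun p : ℝ × ℝ ↦ -b * p.1 + p.2) ⁻¹' Set.Iic a
  have hS : MeasurableSet S := measurableSet_Iic.preimage (by fun_prop)
  have hslice (u : ℝ) : Prod.mk u ⁻¹' S = Set.Iic (a + b * u) := by
    ext z
    simp only [S, Set.mem_preimage, Set.mem_Iic]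
    constructor <;> intro h <;> linarith
  calc ∫ u, stdGaussianCDF ((a + b * u) / √w) ∂gaussianReal m v
      = ∫ u, (gaussianReal 0 w (Prod.mk u ⁻¹' S)).toReal ∂gaussianReal m v := by
        simp_rw [hslice, gaussianReal_Iic_toReal 0 hw, sub_zero]
    _ = (∫⁻ u, gaussianReal 0 w (Prod.mk u ⁻¹' S) ∂gaussianReal m v).toReal :=
        integral_toReal (measurable_measure_prodMk_left hS).aemeasurable
          (ae_of_all _ fun _ ↦ measure_lt_top _ _)
    _ = (((gaussianReal m v).prod (gaussianReal 0 w)).map (fun p ↦ -b * p.1 + p.2)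
          (Set.Iic a)).toReal := by
        rw [Measure.map_apply (by fun_prop) measurableSet_Iic, Measure.prod_apply hS]
    _ = stdGaussianCDF ((a + b * m) / √(b ^ 2 * v + w)) := by
        rw [gaussianReal_prod_map_mul_add, gaussianReal_Iic_toReal _ (by positivity)]
        simp only [NNReal.coe_add, NNReal.coe_mul, NNReal.coe_mk, neg_sq, add_zero,
          neg_mul, sub_neg_eq_add]

lemma integral_gaussianPDFReal_mul_stdGaussianCDF (a b m : ℝ) {v w : ℝ≥0} (hv : v ≠ 0)
    (hw : w ≠ 0) :
    ∫ u, gaussianPDFReal m v u * stdGaussianCDF ((a + b * u) / √w)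
      = stdGaussianCDF ((a + b * m) / √(b ^ 2 * v + w)) := by
  rw [← integral_stdGaussianCDF_gaussianReal a b m v hw, integral_gaussianReal_eq_integral_smul hv]
  rfl

theorem copas_gaussian_integral_identity_general
    (t θ γ1 γ2 τ s ρ : ℝ) (hs : 0 < s) (hρ : ρ ∈ Set.Ioo (-1 : ℝ) 1) :
    (∫ u : ℝ, stdGaussianPDF u * ((1 / s) * stdGaussianPDF ((t - θ - τ * u) / s)) *
        stdGaussianCDF ((γ1 + γ2 / s + ρ * (t - θ - τ * u) / s) / Real.sqrt (1 - ρ ^ 2)))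
      = (1 / Real.sqrt (τ ^ 2 + s ^ 2)) * stdGaussianPDF ((t - θ) / Real.sqrt (τ ^ 2 + s ^ 2)) *
        stdGaussianCDF ((γ1 + γ2 / s + ρ * s * (t - θ) / (τ ^ 2 + s ^ 2)) /
          Real.sqrt (1 - ρ ^ 2 * s ^ 2 / (τ ^ 2 + s ^ 2))) := by
  obtain ⟨hρ1, hρ2⟩ := hρ
  set c := t - θ
  set w : ℝ≥0 := .mk (s ^ 2) (sq_nonneg s)
  set T : ℝ≥0 := .mk (τ ^ 2) (sq_nonneg τ) + w
  set q : ℝ≥0 := .mk (1 - ρ ^ 2) (by nlinarith)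
  have hw : w ≠ 0 := by simp [w, ← NNReal.coe_ne_zero, hs.ne']
  have hT : T ≠ 0 := by simp [T, hw]
  have hq : q ≠ 0 := by simp [q, ← NNReal.coe_ne_zero]; nlinarith
  have hTr : (T : ℝ) = τ ^ 2 + s ^ 2 := rfl
  have hintegrand (u : ℝ) :
      stdGaussianPDF u * ((1 / s) * stdGaussianPDF ((c - τ * u) / s)) *
        stdGaussianCDF ((γ1 + γ2 / s + ρ * (c - τ * u) / s) / √(1 - ρ ^ 2))
      = gaussianPDFReal 0 T c * (gaussianPDFReal (τ * c / T) (w / T) u *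
        stdGaussianCDF ((γ1 + γ2 / s + ρ * c / s + -(ρ * τ / s) * u) / √q)) := by
    have hlik : (1 / s) * stdGaussianPDF ((c - τ * u) / s) = gaussianPDFReal (τ * u) w c := by
      rw [gaussianPDFReal_eq_stdGaussianPDF _ hw, show √(w : ℝ) = s from Real.sqrt_sq hs.le]
    rw [hlik, stdGaussianPDF_mul_gaussianPDFReal_mul _ _ _ hw, mul_assoc,
      show γ1 + γ2 / s + ρ * (c - τ * u) / s = γ1 + γ2 / s + ρ * c / s + -(ρ * τ / s) * u by ring]
    rfl
  have hmean : γ1 + γ2 / s + ρ * c / s + -(ρ * τ / s) * (τ * c / T)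
      = γ1 + γ2 / s + ρ * s * c / (τ ^ 2 + s ^ 2) := by
    rw [hTr]
    field_simp
    ring
  have hvar : (-(ρ * τ / s)) ^ 2 * (w / T : ℝ≥0) + q = 1 - ρ ^ 2 * s ^ 2 / (τ ^ 2 + s ^ 2) := by
    rw [NNReal.coe_div, hTr]
    simp only [w, q, NNReal.coe_mk]
    field_simp
    ring
  simp_rw [hintegrand, integral_const_mul]
  rw [integral_gaussianPDFReal_mul_stdGaussianCDF _ _ _ (by simp [hw, hT]) hq, hmean, hvar,
    gaussianPDFReal_eq_stdGaussianPDF _ hT, hTr, sub_zero]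

/-- The Gaussian integral identity underlying the computation of the publication
probability given `(θ*, s*)` in the Copas-like selection model. -/
theorem copas_gaussian_integral_identity
    (t θ γ1 γ2 τ s ρ : ℝ) (hτ : 0 ≤ τ) (hs : 0 < s) (hρ : ρ ∈ Set.Ioo (-1 : ℝ) 1) :
    (∫ u : ℝ, stdGaussianPDF u * ((1 / s) * stdGaussianPDF ((t - θ - τ * u) / s)) *
        stdGaussianCDF ((γ1 + γ2 / s + ρ * (t - θ - τ * u) / s) / Real.sqrt (1 - ρ ^ 2)))
      = (1 / Real.sqrt (τ ^ 2 + s ^ 2)) * stdGaussianPDF ((t - θ) / Real.sqrt (τ ^ 2 + s ^ 2)) *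
        stdGaussianCDF ((γ1 + γ2 / s + ρ * s * (t - θ) / (τ ^ 2 + s ^ 2)) /
          Real.sqrt (1 - ρ ^ 2 * s ^ 2 / (τ ^ 2 + s ^ 2))) :=
  copas_gaussian_integral_identity_general t θ γ1 γ2 τ s ρ hs hρ
end

section
/- For all a, b, m ∈ ℝ and σ ≥ 0, the integral of x ↦ Φ(a + b x) with respect to the Gaussian measure with mean m and variance σ² equals Φ((a + b m)/√(1 + b²σ²)); in particular, ∫_ℝ Φ(a + b x) φ(x) dx = Φ(a/√(1 + b²)). -/
open MeasureTheory ProbabilityTheory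

/-!
Write `Φ(a + b x) = P(Z ≤ a + b x)` for `Z ~ N(0, 1)`. Averaging over `X ~ N(m, v)` gives
`P(-b X + Z ≤ a)`, the value on `Iic a` of the convolution `N(-b m, b² v) ∗ N(0, 1)`, which is
the Gaussian `N(-b m, b² v + 1)`; standardizing turns this into `Φ((a + b m) / √(1 + b² v))`.
-/

open scoped NNReal

namespace MeasureTheory.Measure

theorem conv_apply {M : Type*} [AddMonoid M] [MeasurableSpace M] [MeasurableAdd₂ M]
    (μ ν : Measure M) [SFinite ν] {s : Set M} (hs : MeasurableSet s) :
    (μ ∗ ν) s = ∫⁻ x, ν ((x + ·) ⁻¹' s) ∂μ := by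
  rw [conv, map_apply measurable_add hs, prod_apply (measurable_add hs)]
  rfl

end MeasureTheory.Measure

namespace ProbabilityTheory

theorem gaussianReal_map_sqrt_mul_add (μ : ℝ) (v : ℝ≥0) :
    (gaussianReal 0 1).map (fun x ↦ √v * x + μ) = gaussianReal μ v := by
  change Measure.map ((· + μ) ∘ (√v * ·)) _ = _
  rw [← Measure.map_map (by fun_prop) (by fun_prop), gaussianReal_map_const_mul,
    gaussianReal_map_add_const]
  congr 1
  · simp
  · ext; simp

theorem toReal_gaussianReal_Iic (μ : ℝ) {v : ℝ≥0} (hv : v ≠ 0) (t : ℝ) :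
    (gaussianReal μ v (Set.Iic t)).toReal = stdGaussianCDF ((t - μ) / √v) := by
  have hsqrt : 0 < √(v : ℝ) := Real.sqrt_pos.mpr (by positivity)
  have hpre : (fun x ↦ √v * x + μ) ⁻¹' Set.Iic t = Set.Iic ((t - μ) / √v) := by
    ext x
    simp only [Set.mem_preimage, Set.mem_Iic, le_div_iff₀ hsqrt]
    constructor <;> intro h <;> linarith
  rw [← gaussianReal_map_sqrt_mul_add, Measure.map_apply (by fun_prop) measurableSet_Iic, hpre,
    stdGaussianCDF]

theorem lintegral_gaussianReal_Iic_add_mul (a b m : ℝ) (v : ℝ≥0) :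
    ∫⁻ x, gaussianReal 0 1 (Set.Iic (a + b * x)) ∂gaussianReal m v
      = gaussianReal (-(b * m)) (.mk (b ^ 2) (sq_nonneg b) * v + 1) (Set.Iic a) := by
  have hpre : ∀ x, Set.Iic (a + b * x) = (-b * x + ·) ⁻¹' Set.Iic a := fun x ↦ by
    ext y
    simp only [Set.mem_Iic, Set.mem_preimage]
    constructor <;> intro h <;> linarith
  have hmeas : Measurable fun y ↦ gaussianReal 0 1 ((y + ·) ⁻¹' Set.Iic a) :=
    measurable_measure_prodMk_left (measurable_add measurableSet_Iic)
  calc ∫⁻ x, gaussianReal 0 1 (Set.Iic (a + b * x)) ∂gaussianReal m v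
      = ∫⁻ y, gaussianReal 0 1 ((y + ·) ⁻¹' Set.Iic a) ∂(gaussianReal m v).map (-b * ·) := by
        rw [lintegral_map hmeas (by fun_prop)]
        simp_rw [hpre]
    _ = ((gaussianReal m v).map (-b * ·) ∗ gaussianReal 0 1) (Set.Iic a) :=
        (Measure.conv_apply _ _ measurableSet_Iic).symm
    _ = gaussianReal (-(b * m)) (.mk (b ^ 2) (sq_nonneg b) * v + 1) (Set.Iic a) := by
        rw [gaussianReal_map_const_mul, gaussianReal_conv_gaussianReal, add_zero, neg_mul]
        simp only [neg_sq]

theorem integral_stdGaussianCDF_add_mul (a b m : ℝ) (v : ℝ≥0) :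
    ∫ x, stdGaussianCDF (a + b * x) ∂gaussianReal m v
      = stdGaussianCDF ((a + b * m) / √(1 + b ^ 2 * v)) := by
  have hmono : Monotone fun t ↦ gaussianReal 0 1 (Set.Iic t) :=
    fun _ _ hst ↦ measure_mono (Set.Iic_subset_Iic.mpr hst)
  have hmeas : Measurable fun x ↦ gaussianReal 0 1 (Set.Iic (a + b * x)) :=
    hmono.measurable.comp (by fun_prop)
  simp only [stdGaussianCDF]
  rw [integral_toReal hmeas.aemeasurable (ae_of_all _ fun _ ↦ measure_lt_top _ _),
    lintegral_gaussianReal_Iic_add_mul, toReal_gaussianReal_Iic _ (by simp)]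
  congr 2
  · ring
  · rw [NNReal.coe_add, NNReal.coe_mul, NNReal.coe_mk, NNReal.coe_one, add_comm]

end ProbabilityTheory

theorem gaussian_smoothing_probit_general
    (a b m σ : ℝ) :
    (∫ x : ℝ, stdGaussianCDF (a + b * x) ∂(gaussianReal m (Real.toNNReal (σ ^ 2)))
        = stdGaussianCDF ((a + b * m) / Real.sqrt (1 + b ^ 2 * σ ^ 2)))
    ∧ (∫ x : ℝ, stdGaussianCDF (a + b * x) * stdGaussianPDF x
        = stdGaussianCDF (a / Real.sqrt (1 + b ^ 2))) := by
  constructor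
  · rw [integral_stdGaussianCDF_add_mul, Real.coe_toNNReal _ (sq_nonneg σ)]
  · have h := integral_stdGaussianCDF_add_mul a b 0 1
    rw [integral_gaussianReal_eq_integral_smul one_ne_zero] at h
    simpa [stdGaussianPDF, mul_comm] using h

/-- Gaussian smoothing identity: the integral of `x ↦ Φ(a + b x)` with respect to the
Gaussian measure with mean `m` and variance `σ²` equals `Φ((a + b m)/√(1 + b²σ²))`;
in particular, `∫ Φ(a + b x) φ(x) dx = Φ(a/√(1 + b²))`. -/
theorem gaussian_smoothing_probit
    (a b m σ : ℝ) (hσ : 0 ≤ σ) :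
    (∫ x : ℝ, stdGaussianCDF (a + b * x) ∂(gaussianReal m (Real.toNNReal (σ ^ 2)))
        = stdGaussianCDF ((a + b * m) / Real.sqrt (1 + b ^ 2 * σ ^ 2)))
    ∧ (∫ x : ℝ, stdGaussianCDF (a + b * x) * stdGaussianPDF x
        = stdGaussianCDF (a / Real.sqrt (1 + b ^ 2))) :=
  gaussian_smoothing_probit_general a b m σ
end

section
/- Let n ≥ 1, c_1, …, c_n ∈ ℝ, α ∈ ℝ, and λ ∈ ℝ be such that 1 + λ(c_i − α) > 0 for every i and ∑_{i=1}^n (c_i − α)/(1 + λ(c_i − α)) = 0, and set p_i := 1/(n(1 + λ(c_i − α))). Then for every q = (q_1, …, q_n) with q_i ≥ 0, ∑_{i=1}^n q_i = 1 and ∑_{i=1}^n q_i c_i = α, one has ∏_{i=1}^n q_i ≤ ∏_{i=1}^n p_i. That is, (p_1, …, p_n) maximizes the empirical likelihood ∏_i q_i over the constrained probability simplex. -/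
/-!
Put `d i = 1 + λ (c i - α)`. The mean constraint makes `q i * d i` a probability vector, since
`∑ q i * d i = ∑ q i + λ (∑ q i * c i - α ∑ q i) = 1`. By AM-GM its product is at most `n⁻¹ ^ n`,
and dividing by `∏ d i > 0` gives `∏ q i ≤ ∏ 1 / (n * d i)`.
-/

open Finset

theorem Finset.prod_le_arith_mean_pow {ι : Type*} (s : Finset ι) {z : ι → ℝ}
    (hz : ∀ i ∈ s, 0 ≤ z i) :
    ∏ i ∈ s, z i ≤ ((∑ i ∈ s, z i) / #s) ^ #s := by
  rcases s.eq_empty_or_nonempty with rfl | hs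
  · simp
  have hcard : #s ≠ 0 := hs.card_ne_zero
  have hmean := Real.geom_mean_le_arith_mean s 1 z (fun _ _ => zero_le_one)
    (by simpa using hs.card_pos) hz
  simp only [Pi.one_apply, Real.rpow_one, one_mul, sum_const, nsmul_eq_mul, mul_one] at hmean
  calc ∏ i ∈ s, z i
      = ((∏ i ∈ s, z i) ^ (#s : ℝ)⁻¹) ^ #s :=
        (Real.rpow_inv_natCast_pow (prod_nonneg hz) hcard).symm
    _ ≤ ((∑ i ∈ s, z i) / #s) ^ #s :=
        pow_le_pow_left₀ (Real.rpow_nonneg (prod_nonneg hz) _) hmean _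

theorem prod_le_prod_one_div_card_mul_of_sum_mul_eq_one {ι : Type*} [Fintype ι]
    {q d : ι → ℝ} (hq : ∀ i, 0 ≤ q i) (hd : ∀ i, 0 < d i) (hqd : ∑ i, q i * d i = 1) :
    ∏ i, q i ≤ ∏ i, 1 / (Fintype.card ι * d i) := by
  have hamgm : ∏ i, q i * d i ≤ ((Fintype.card ι : ℝ)⁻¹) ^ Fintype.card ι := by
    simpa [hqd] using prod_le_arith_mean_pow univ fun i _ => mul_nonneg (hq i) (hd i).le
  have hD : 0 < ∏ i, d i := prod_pos fun i _ => hd i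
  rw [prod_mul_distrib, ← le_div_iff₀ hD] at hamgm
  simpa [prod_mul_distrib, div_eq_mul_inv, mul_inv, mul_comm] using hamgm

theorem sum_mul_one_add_mul_sub_eq_one {ι : Type*} [Fintype ι] {q c : ι → ℝ} {α lam : ℝ}
    (hq : ∑ i, q i = 1) (hqc : ∑ i, q i * c i = α) :
    ∑ i, q i * (1 + lam * (c i - α)) = 1 := by
  have hexpand : ∀ i, q i * (1 + lam * (c i - α)) = q i + lam * (q i * c i - α * q i) :=
    fun i => by ring
  simp only [hexpand, sum_add_distrib, ← mul_sum, sum_sub_distrib, hq, hqc]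
  ring

theorem empirical_likelihood_weights_maximize_general
    (n : ℕ) (c : Fin n → ℝ) (α lam : ℝ)
    (hpos : ∀ i, 0 < 1 + lam * (c i - α))
    (p : Fin n → ℝ) (hp : p = fun i => 1 / (n * (1 + lam * (c i - α)))) :
    ∀ q : Fin n → ℝ, (∀ i, 0 ≤ q i) → (∑ i, q i = 1) → (∑ i, q i * c i = α) →
      ∏ i, q i ≤ ∏ i, p i := by
  intro q hq hq1 hqc
  subst hp
  simpa using prod_le_prod_one_div_card_mul_of_sum_mul_eq_one hq hpos
    (sum_mul_one_add_mul_sub_eq_one hq1 hqc)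

/-- The empirical likelihood weights `p_i = 1/(n(1 + λ(c_i − α)))` maximize the empirical
likelihood `∏ q_i` over probability vectors `q` satisfying the mean constraint
`∑ q_i c_i = α`. -/
theorem empirical_likelihood_weights_maximize
    (n : ℕ) (hn : 1 ≤ n) (c : Fin n → ℝ) (α lam : ℝ)
    (hpos : ∀ i, 0 < 1 + lam * (c i - α))
    (hsum : ∑ i, (c i - α) / (1 + lam * (c i - α)) = 0)
    (p : Fin n → ℝ) (hp : p = fun i => 1 / (n * (1 + lam * (c i - α)))) :
    ∀ q : Fin n → ℝ, (∀ i, 0 ≤ q i) → (∑ i, q i = 1) → (∑ i, q i * c i = α) →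
      ∏ i, q i ≤ ∏ i, p i :=
  empirical_likelihood_weights_maximize_general n c α lam hpos p hp
end

section
/- Block-matrix form of Proposition 1 (V = V_c): Let α0 ∈ (0, 1), φ1 ∈ ℝ with α0 φ1 > 1, φ2 ∈ ℝ² (a 2×1 column vector), and let V_c be an invertible real 5×5 matrix. Define the 4×4 matrix Ṽ_m with 2×2-block structure Ṽ_m = [[A, B], [Bᵀ, C]] where A = [[α0/(1−α0), 1/(1−α0)], [1/(1−α0), (1−φ1)/((1−α0)(1−α0φ1))]], B is the 2×2 matrix whose first row is zero and whose second row is φ2ᵀ/(1−α0φ1), and C = −α0 φ2 φ2ᵀ/(1−α0φ1). Let F1 = (I_4, 0_{4×3}) (4×7) and F2 = (0_{5×2}, I_5) (5×7), and set Ω = F2ᵀ V_c F2 + F1ᵀ Ṽ_m F1 (a 7×7 matrix). Then Ω is invertible and the lower-right 5×5 submatrix of Ω^{−1} equals V_c^{−1}. -/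
open Matrix

/-- The matrix `Ṽ_m` of the full-likelihood information. -/
noncomputable def tildeVm (α0 φ1 : ℝ) (φ2 : Fin 2 → ℝ) : Matrix (Fin 4) (Fin 4) ℝ :=
  !![α0 / (1 - α0), 1 / (1 - α0), 0, 0;
     1 / (1 - α0), (1 - φ1) / ((1 - α0) * (1 - α0 * φ1)),
       φ2 0 / (1 - α0 * φ1), φ2 1 / (1 - α0 * φ1);
     0, φ2 0 / (1 - α0 * φ1),
       -(α0 * (φ2 0 * φ2 0)) / (1 - α0 * φ1), -(α0 * (φ2 0 * φ2 1)) / (1 - α0 * φ1);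
     0, φ2 1 / (1 - α0 * φ1),
       -(α0 * (φ2 1 * φ2 0)) / (1 - α0 * φ1), -(α0 * (φ2 1 * φ2 1)) / (1 - α0 * φ1)]

/-- `F1 = (I_4, 0_{4×3})`. -/
def matF1 : Matrix (Fin 4) (Fin 7) ℝ :=
  Matrix.of fun i j => if (j : ℕ) = (i : ℕ) then 1 else 0

/-- `F2 = (0_{5×2}, I_5)`. -/
def matF2 : Matrix (Fin 5) (Fin 7) ℝ :=
  Matrix.of fun i j => if (j : ℕ) = (i : ℕ) + 2 then 1 else 0

/-- The full-likelihood information matrix `Ω = F2ᵀ V_c F2 + F1ᵀ Ṽ_m F1`. -/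
noncomputable def fullInfo (α0 φ1 : ℝ) (φ2 : Fin 2 → ℝ) (Vc : Matrix (Fin 5) (Fin 5) ℝ) :
    Matrix (Fin 7) (Fin 7) ℝ :=
  matF2ᵀ * Vc * matF2 + matF1ᵀ * tildeVm α0 φ1 φ2 * matF1

/-! Reorder the coordinates of `Ω` as `(N/N0, α) ⊕ γ` and write `B' = (B, 0)`. Because the
`γγ`-block of `Ṽ_m` is `Bᵀ A⁻¹ B`, `Ω = [A 0; B'ᵀ V_c] * [1 X; 0 1]` with `X = A⁻¹ B'`. Hence
`det Ω = det A * det V_c`, and `Ω⁻¹ = [1 -X; 0 1] * [A⁻¹ 0; * V_c⁻¹]` has lower-right block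
`V_c⁻¹`. -/

section SchurFactor

variable {m n : Type*} [Fintype m] [Fintype n] [DecidableEq m] [DecidableEq n]

theorem Matrix.fromBlocks_mul_add_eq {R : Type*} [Semiring R] (A : Matrix m m R)
    (X : Matrix m n R) (C : Matrix n m R) (D : Matrix n n R) :
    fromBlocks A (A * X) C (C * X + D) = fromBlocks A 0 C D * fromBlocks 1 X 0 1 := by
  simp [fromBlocks_multiply]

theorem Matrix.det_fromBlocks_mul_add {R : Type*} [CommRing R] (A : Matrix m m R)
    (X : Matrix m n R) (C : Matrix n m R) (D : Matrix n n R) :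
    (fromBlocks A (A * X) C (C * X + D)).det = A.det * D.det := by
  rw [fromBlocks_mul_add_eq, det_mul, det_fromBlocks_zero₁₂, det_fromBlocks_zero₂₁, det_one,
    det_one, mul_one, mul_one]

theorem Matrix.toBlocks₂₂_inv_fromBlocks_mul_add {R : Type*} [CommRing R] {A : Matrix m m R}
    (X : Matrix m n R) (C : Matrix n m R) {D : Matrix n n R} (hA : IsUnit A.det)
    (hD : IsUnit D.det) :
    (fromBlocks A (A * X) C (C * X + D))⁻¹.toBlocks₂₂ = D⁻¹ := by
  have hAD : IsUnit A ↔ IsUnit D :=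
    iff_of_true ((isUnit_iff_isUnit_det A).mpr hA) ((isUnit_iff_isUnit_det D).mpr hD)
  rw [fromBlocks_mul_add_eq, mul_inv_rev,
    inv_fromBlocks_zero₂₁_of_isUnit_iff _ _ _ (iff_of_true isUnit_one isUnit_one),
    inv_fromBlocks_zero₁₂_of_isUnit_iff _ _ _ hAD]
  simp [fromBlocks_multiply]

end SchurFactor

def finSumEquivOfAdd {k n N : ℕ} (h : k + n = N) : Fin k ⊕ Fin n ≃ Fin N :=
  finSumFinEquiv.trans (finCongr h)

@[simp]
theorem finSumEquivOfAdd_inl {k n N : ℕ} (h : k + n = N) (i : Fin k) :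
    finSumEquivOfAdd h (.inl i) = ⟨i, by omega⟩ :=
  rfl

@[simp]
theorem finSumEquivOfAdd_inr {k n N : ℕ} (h : k + n = N) (i : Fin n) :
    finSumEquivOfAdd h (.inr i) = ⟨k + i, by omega⟩ :=
  rfl

local notation "e₂₂" => (finSumEquivOfAdd rfl : Fin 2 ⊕ Fin 2 ≃ Fin 4)
local notation "e₂₅" => (finSumEquivOfAdd rfl : Fin 2 ⊕ Fin 5 ≃ Fin 7)

theorem matF2_submatrix_finSumEquivOfAdd : matF2.submatrix id e₂₅ = fromCols 0 1 := by
  ext i (j | j) <;> simp [matF2, one_apply, Fin.ext_iff] <;> grind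

theorem matF1_submatrix_finSumEquivOfAdd :
    matF1.submatrix e₂₂ e₂₅ = fromBlocks 1 0 0 (matF1.submatrix (e₂₂ ∘ .inr) (e₂₅ ∘ .inr)) := by
  ext (i | i) (j | j) <;> simp [matF1, one_apply, Fin.ext_iff] <;> grind

theorem fullInfo_submatrix_finSumEquivOfAdd {α0 φ1 : ℝ} {φ2 : Fin 2 → ℝ}
    (Vc : Matrix (Fin 5) (Fin 5) ℝ) {A C K : Matrix (Fin 2) (Fin 2) ℝ}
    (hT : (tildeVm α0 φ1 φ2).submatrix e₂₂ e₂₂ = fromBlocks A (A * K) C (C * K)) :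
    ∃ P : Matrix (Fin 2) (Fin 5) ℝ, (fullInfo α0 φ1 φ2 Vc).submatrix e₂₅ e₂₅ =
      fromBlocks A (A * (K * P)) (Pᵀ * C) (Pᵀ * C * (K * P) + Vc) := by
  refine ⟨matF1.submatrix (e₂₂ ∘ .inr) (e₂₅ ∘ .inr), ?_⟩
  rw [fullInfo, submatrix_add, Pi.add_apply, Pi.add_apply,
    ← submatrix_mul_equiv _ _ _ e₂₂, ← submatrix_mul_equiv _ _ _ e₂₂,
    ← submatrix_mul_equiv _ _ _ (Equiv.refl _), ← submatrix_mul_equiv _ _ _ (Equiv.refl _),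
    ← transpose_submatrix, ← transpose_submatrix, Equiv.coe_refl, submatrix_id_id,
    matF2_submatrix_finSumEquivOfAdd, matF1_submatrix_finSumEquivOfAdd, hT, transpose_fromCols,
    fromBlocks_transpose, fromRows_mul, fromRows_mul_fromCols, fromBlocks_multiply,
    fromBlocks_multiply]
  simp only [Matrix.zero_mul, Matrix.mul_zero, Matrix.one_mul, Matrix.mul_one, transpose_zero,
    transpose_one, add_zero, zero_add, fromBlocks_add, Matrix.mul_assoc]
  rw [add_comm Vc]

noncomputable def tildeVmA (α0 φ1 : ℝ) : Matrix (Fin 2) (Fin 2) ℝ :=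
  !![α0 / (1 - α0), 1 / (1 - α0);
     1 / (1 - α0), (1 - φ1) / ((1 - α0) * (1 - α0 * φ1))]

noncomputable def tildeVmB (α0 φ1 : ℝ) (φ2 : Fin 2 → ℝ) : Matrix (Fin 2) (Fin 2) ℝ :=
  !![0, 0;
     φ2 0 / (1 - α0 * φ1), φ2 1 / (1 - α0 * φ1)]

def tildeVmK (α0 : ℝ) (φ2 : Fin 2 → ℝ) : Matrix (Fin 2) (Fin 2) ℝ :=
  !![φ2 0, φ2 1;
     -(α0 * φ2 0), -(α0 * φ2 1)]

theorem det_tildeVmA {α0 φ1 : ℝ} (h₁ : 1 - α0 ≠ 0) (h₂ : 1 - α0 * φ1 ≠ 0) :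
    (tildeVmA α0 φ1).det = -1 / ((1 - α0) * (1 - α0 * φ1)) := by
  rw [tildeVmA, det_fin_two_of]
  field_simp
  ring

theorem tildeVmA_mul_tildeVmK {α0 φ1 : ℝ} (φ2 : Fin 2 → ℝ) (h₁ : 1 - α0 ≠ 0)
    (h₂ : 1 - α0 * φ1 ≠ 0) : tildeVmA α0 φ1 * tildeVmK α0 φ2 = tildeVmB α0 φ1 φ2 := by
  ext i j; fin_cases i <;> fin_cases j <;>
    simp [tildeVmA, tildeVmB, tildeVmK, mul_apply] <;> field_simp <;> ring

theorem tildeVm_submatrix_finSumEquivOfAdd {α0 φ1 : ℝ} (φ2 : Fin 2 → ℝ) (h₁ : 1 - α0 ≠ 0)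
    (h₂ : 1 - α0 * φ1 ≠ 0) :
    (tildeVm α0 φ1 φ2).submatrix e₂₂ e₂₂ =
      fromBlocks (tildeVmA α0 φ1) (tildeVmA α0 φ1 * tildeVmK α0 φ2) (tildeVmB α0 φ1 φ2)ᵀ
        ((tildeVmB α0 φ1 φ2)ᵀ * tildeVmK α0 φ2) := by
  rw [tildeVmA_mul_tildeVmK φ2 h₁ h₂]
  ext (i | i) (j | j) <;> fin_cases i <;> fin_cases j <;>
    simp [tildeVm, tildeVmA, tildeVmB, tildeVmK, mul_apply] <;> ring

/-- Proposition 1 (V = V_c), block-matrix form: `Ω` is invertible and the lower-right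
`5×5` submatrix of `Ω⁻¹` equals `V_c⁻¹`. -/
theorem full_info_inverse_lower_right_block
    (α0 φ1 : ℝ) (φ2 : Fin 2 → ℝ) (Vc : Matrix (Fin 5) (Fin 5) ℝ)
    (hα : α0 ∈ Set.Ioo (0 : ℝ) 1) (hφ : 1 < α0 * φ1) (hVc : IsUnit Vc.det) :
    IsUnit (fullInfo α0 φ1 φ2 Vc).det ∧
    ((fullInfo α0 φ1 φ2 Vc)⁻¹).submatrix
        (fun i : Fin 5 => i.addNat 2) (fun j : Fin 5 => j.addNat 2) = Vc⁻¹ := by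
  have h₁ : 1 - α0 ≠ 0 := (sub_pos.mpr hα.2).ne'
  have h₂ : 1 - α0 * φ1 ≠ 0 := (sub_neg.mpr hφ).ne
  have hA : IsUnit (tildeVmA α0 φ1).det := by
    rw [det_tildeVmA h₁ h₂, isUnit_iff_ne_zero]
    exact div_ne_zero (by norm_num) (mul_ne_zero h₁ h₂)
  obtain ⟨P, hΩ⟩ :=
    fullInfo_submatrix_finSumEquivOfAdd Vc (tildeVm_submatrix_finSumEquivOfAdd φ2 h₁ h₂)
  have hdet : (fullInfo α0 φ1 φ2 Vc).det = (tildeVmA α0 φ1).det * Vc.det := by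
    rw [← det_submatrix_equiv_self e₂₅, hΩ, det_fromBlocks_mul_add]
  refine ⟨hdet ▸ hA.mul hVc, ?_⟩
  have hinv := congrArg toBlocks₂₂ (inv_submatrix_equiv (fullInfo α0 φ1 φ2 Vc) e₂₅ e₂₅)
  rw [hΩ, toBlocks₂₂_inv_fromBlocks_mul_add _ _ hA hVc] at hinv
  have hcoord : (fun i : Fin 5 => i.addNat 2) = e₂₅ ∘ .inr :=
    funext fun i => Fin.ext (add_comm _ _)
  rw [hcoord, hinv]
  rfl
end
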